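/- Let X be a real random variable with E[X] = 0 and E[|X|³] < ∞, let u, y ∈ ℝ, let v : ℝ → ℝ be positive and twice differentiable at u, and suppose the map ψ(x) := φ(v(u − x), y) is twice differentiable on ℝ with second derivative Lipschitz with constant L ≥ 0. Then for every ε > 0, | E[φ(v(u − εX), y)] − φ(v(u), y) · [ 1 + (ε² E[X²]/2) ( v'(u)² (y⁴ − 6 v(u) y² + 3 v(u)²)/(4 v(u)⁴) + v''(u) (y² − v(u))/(2 v(u)²) ) ] | ≤ (L/6) ε³ E[|X|³]. In particular, the density h_ε(y) = E[φ(v(u − εX), y)] equals φ(v(u), y) + (ε² E[X²]/2)(∂²_{vv}φ(v(u), y) v'(u)² + ∂_v φ(v(u), y) v''(u)) up to an error of order ε³, where ∂_v φ(v, y) = φ(v, y)(y² − v)/(2v²) and ∂²_{vv} φ(v, y) = φ(v, y)(y⁴ − 6vy² + 3v²)/(4v⁴). -/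

import Mathlib

/-!
`ψ(x) = φ(v(u - x), y)` agrees with its second-order Taylor polynomial at `0` up to `L|x|³/6`,
obtained by integrating the Lipschitz bound on `ψ''` twice. Substituting `x = εX` and taking
expectations, the linear term vanishes because `E[X] = 0`, and the second-order chain rule gives
`ψ''(0) = ∂²ᵥφ(v(u), y) v'(u)² + ∂ᵥφ(v(u), y) v''(u)`, with the two `v`-derivatives of the
Gaussian density computed explicitly.
-/

open MeasureTheory ProbabilityTheory

/-- `φ(v, y) = (2πv)^{-1/2} e^{-y²/(2v)}`, the density of `N(0, v)`. -/
noncomputable def gaussDensity (v y : ℝ) : ℝ :=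
  (Real.sqrt (2 * Real.pi * v))⁻¹ * Real.exp (-y ^ 2 / (2 * v))

open Filter Topology

lemma abs_le_of_hasDerivAt_of_abs_deriv_le {g g' B B' : ℝ → ℝ} {a t : ℝ}
    (hg : ∀ x, HasDerivAt g (g' x) x) (hB : ∀ x, HasDerivAt B (B' x) x)
    (ha : |g a| ≤ B a) (bound : ∀ s, a ≤ s → |g' s| ≤ B' s) (hat : a ≤ t) :
    |g t| ≤ B t :=
  image_norm_le_of_norm_deriv_right_le_deriv_boundary
    (fun x _ => (hg x).continuousAt.continuousWithinAt) (fun x _ => (hg x).hasDerivWithinAt)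
    ha hB (fun x hx => bound x hx.1) ⟨hat, le_rfl⟩

section Taylor

variable {f f' f'' : ℝ → ℝ} {L : NNReal}

lemma abs_taylor_two_le_of_lipschitz_of_nonneg (hf' : ∀ x, HasDerivAt f (f' x) x)
    (hf'' : ∀ x, HasDerivAt f' (f'' x) x) (hL : LipschitzWith L f'') {t : ℝ} (ht : 0 ≤ t) :
    |f t - f 0 - f' 0 * t - f'' 0 * t ^ 2 / 2| ≤ L * t ^ 3 / 6 := by
  have hf'_taylor : ∀ s, 0 ≤ s → |f' s - f' 0 - f'' 0 * s| ≤ L * s ^ 2 / 2 := by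
    refine fun s hs => abs_le_of_hasDerivAt_of_abs_deriv_le (g' := fun x => f'' x - f'' 0)
      (B := fun s => L * s ^ 2 / 2) (B' := fun s => L * s)
      (fun x => ((hf'' x).sub_const _).sub
        ((hasDerivAt_id x).const_mul _ |>.congr_deriv (by simp)))
      (fun x => ((hasDerivAt_pow 2 x).const_mul (L : ℝ)).div_const 2 |>.congr_deriv (by ring))
      (by simp) (fun x hx => ?_) hs
    simpa [Real.dist_eq, abs_of_nonneg hx] using hL.dist_le_mul x 0
  exact abs_le_of_hasDerivAt_of_abs_deriv_le (B := fun s => L * s ^ 3 / 6)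
    (fun x => (((hf' x).sub_const _).sub
      ((hasDerivAt_id x).const_mul _ |>.congr_deriv (by simp))).sub
      (((hasDerivAt_pow 2 x).const_mul (f'' 0)).div_const 2 |>.congr_deriv (by ring)))
    (fun x => ((hasDerivAt_pow 3 x).const_mul (L : ℝ)).div_const 6 |>.congr_deriv (by ring))
    (by simp) hf'_taylor ht

lemma abs_taylor_two_le_of_lipschitz (hf' : ∀ x, HasDerivAt f (f' x) x)
    (hf'' : ∀ x, HasDerivAt f' (f'' x) x) (hL : LipschitzWith L f'') (t : ℝ) :
    |f t - f 0 - f' 0 * t - f'' 0 * t ^ 2 / 2| ≤ L * |t| ^ 3 / 6 := by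
  rcases le_or_gt 0 t with ht | ht
  · simpa [abs_of_nonneg ht] using abs_taylor_two_le_of_lipschitz_of_nonneg hf' hf'' hL ht
  · have h := abs_taylor_two_le_of_lipschitz_of_nonneg (f := fun s => f (-s))
      (f' := fun s => -f' (-s)) (f'' := fun s => f'' (-s))
      (fun x => ((hf' (-x)).comp x (hasDerivAt_neg x)).congr_deriv (mul_neg_one _))
      (fun x => ((hf'' (-x)).comp x (hasDerivAt_neg x)).neg.congr_deriv (by ring))
      (LipschitzWith.of_dist_le_mul fun x y => by simpa using hL.dist_le_mul (-x) (-y))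
      (neg_nonneg.2 ht.le)
    rw [abs_of_neg ht]
    convert h using 2; simp

end Taylor

lemma hasDerivAt_gaussDensity (y : ℝ) {w : ℝ} (hw : 0 < w) :
    HasDerivAt (gaussDensity · y) (gaussDensity w y * ((y ^ 2 - w) / (2 * w ^ 2))) w := by
  have h2πw : 0 < 2 * Real.pi * w := by positivity
  have hsqrt := (((hasDerivAt_id' w).const_mul (2 * Real.pi)).sqrt h2πw.ne').fun_inv
    (Real.sqrt_pos.2 h2πw).ne'
  have hexp := ((hasDerivAt_const w (-y ^ 2)).fun_div ((hasDerivAt_id' w).const_mul 2)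
    (by positivity)).exp
  refine (hsqrt.fun_mul hexp).congr_deriv ?_
  rw [Real.sq_sqrt h2πw.le]
  simp only [gaussDensity]
  field_simp
  ring

lemma hasDerivAt_gaussDensity_deriv (y : ℝ) {w : ℝ} (hw : 0 < w) :
    HasDerivAt (fun v => gaussDensity v y * ((y ^ 2 - v) / (2 * v ^ 2)))
      (gaussDensity w y * ((y ^ 4 - 6 * w * y ^ 2 + 3 * w ^ 2) / (4 * w ^ 4))) w := by
  have hratio := ((hasDerivAt_id' w).const_sub (y ^ 2)).fun_div
    ((hasDerivAt_pow 2 w).const_mul 2) (by positivity)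
  refine ((hasDerivAt_gaussDensity y hw).fun_mul hratio).congr_deriv ?_
  field_simp
  ring

lemma hasDerivAt_second_deriv_comp {F F₁ w w₁ ψ₁ : ℝ → ℝ} {F₂ w₂ x : ℝ}
    (hF : ∀ᶠ z in 𝓝 (w x), HasDerivAt F (F₁ z) z) (hF₁ : HasDerivAt F₁ F₂ (w x))
    (hw : ∀ᶠ z in 𝓝 x, HasDerivAt w (w₁ z) z) (hw₁ : HasDerivAt w₁ w₂ x)
    (hψ : ∀ᶠ z in 𝓝 x, HasDerivAt (fun z => F (w z)) (ψ₁ z) z) :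
    HasDerivAt ψ₁ (F₂ * w₁ x ^ 2 + F₁ (w x) * w₂) x := by
  have hF_comp : ∀ᶠ z in 𝓝 x, HasDerivAt F (F₁ (w z)) (w z) :=
    hw.self_of_nhds.continuousAt.tendsto.eventually hF
  have hψ₁ : ψ₁ =ᶠ[𝓝 x] fun z => F₁ (w z) * w₁ z := by
    filter_upwards [hψ, hF_comp, hw] with z hψz hFz hwz
    exact hψz.unique (hFz.comp z hwz)
  exact ((hF₁.comp x hw.self_of_nhds).fun_mul hw₁).congr_of_eventuallyEq hψ₁
    |>.congr_deriv (by rw [Function.comp_apply]; ring)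

section Expectation

variable {Ω : Type*} [MeasurableSpace Ω] {P : Measure Ω} [IsProbabilityMeasure P] {X : Ω → ℝ}

lemma abs_integral_sub_taylor_two_le (hX : AEMeasurable X P) (hX_mean : ∫ ω, X ω ∂P = 0)
    (hX3 : Integrable (fun ω => |X ω| ^ 3) P) {f f' f'' : ℝ → ℝ} {L : NNReal}
    (hf' : ∀ x, HasDerivAt f (f' x) x) (hf'' : ∀ x, HasDerivAt f' (f'' x) x)
    (hL : LipschitzWith L f'') :
    |∫ ω, f (X ω) ∂P - (f 0 + f'' 0 / 2 * ∫ ω, X ω ^ 2 ∂P)| ≤ L / 6 * ∫ ω, |X ω| ^ 3 ∂P := by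
  have hX1 : Integrable X P := by
    refine (integrable_norm_iff hX.aestronglyMeasurable).1 ?_
    simpa using integrable_norm_pow_of_le hX.aestronglyMeasurable (p := 1) (by norm_num) hX3
  have hX2 : Integrable (fun ω => X ω ^ 2) P := by
    simpa using integrable_norm_pow_of_le hX.aestronglyMeasurable (p := 2) (by norm_num) hX3
  have hlin : Integrable (fun ω => f 0 + f' 0 * X ω) P :=
    (integrable_const _).add (hX1.const_mul _)
  have hpoly : Integrable (fun ω => f 0 + f' 0 * X ω + f'' 0 / 2 * X ω ^ 2) P :=
    hlin.add (hX2.const_mul _)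
  set r : Ω → ℝ := fun ω => f (X ω) - (f 0 + f' 0 * X ω + f'' 0 / 2 * X ω ^ 2)
  have hr_le : ∀ ω, ‖r ω‖ ≤ L / 6 * |X ω| ^ 3 := fun ω => by
    have := abs_taylor_two_le_of_lipschitz hf' hf'' hL (X ω)
    rw [Real.norm_eq_abs]
    convert this using 2 <;> ring
  have hr : Integrable r P := by
    have hf_cont : Continuous f := continuous_iff_continuousAt.2 fun x => (hf' x).continuousAt
    refine (hX3.const_mul _).mono' ?_ (ae_of_all _ hr_le)
    exact (hf_cont.comp_aestronglyMeasurable hX.aestronglyMeasurable).sub hpoly.1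
  have hdecomp : ∫ ω, f (X ω) ∂P - (f 0 + f'' 0 / 2 * ∫ ω, X ω ^ 2 ∂P) = ∫ ω, r ω ∂P := by
    have : ∫ ω, f (X ω) ∂P = ∫ ω, r ω + (f 0 + f' 0 * X ω + f'' 0 / 2 * X ω ^ 2) ∂P := by
      simp [r]
    have hpoly_int : ∫ ω, f 0 + f' 0 * X ω + f'' 0 / 2 * X ω ^ 2 ∂P
        = f 0 + f'' 0 / 2 * ∫ ω, X ω ^ 2 ∂P := by
      rw [integral_add hlin (hX2.const_mul _), integral_add (integrable_const _) (hX1.const_mul _)]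
      simp [integral_const_mul, hX_mean]
    rw [this, integral_add hr hpoly, hpoly_int]
    ring
  rw [hdecomp, ← integral_const_mul]
  exact norm_integral_le_of_norm_le (hX3.const_mul _) (ae_of_all _ hr_le)

end Expectation

/-- Small-`ε` expansion of the limiting density `h_ε(y) = E[φ(v(u − εX), y)]`,
with explicit cubic remainder.  Here `v' u` and `v'' u` are the first and second
derivatives of `v` at `u`, and the map `ψ(x) = φ(v(u − x), y)` is twice
differentiable with `ψ''` Lipschitz with constant `L`. -/
theorem limiting_density_small_eps_expansion
    {Ω : Type*} [MeasurableSpace Ω] (P : Measure Ω) [IsProbabilityMeasure P]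
    (X : Ω → ℝ) (hX_meas : Measurable X)
    (hX_mean : ∫ ω, X ω ∂P = 0)
    (hX3 : Integrable (fun ω => |X ω| ^ 3) P)
    (u y : ℝ)
    (v : ℝ → ℝ) (hv_pos : ∀ x, 0 < v x)
    (v' : ℝ → ℝ) (v'' : ℝ)
    (hv' : ∀ᶠ x in nhds u, HasDerivAt v (v' x) x)
    (hv'' : HasDerivAt v' v'' u)
    (ψ' ψ'' : ℝ → ℝ)
    (hψ' : ∀ x : ℝ, HasDerivAt (fun x => gaussDensity (v (u - x)) y) (ψ' x) x)
    (hψ'' : ∀ x : ℝ, HasDerivAt ψ' (ψ'' x) x)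
    (L : NNReal) (hψ''_lip : LipschitzWith L ψ'')
    (ε : ℝ) (hε : 0 < ε) :
    |(∫ ω, gaussDensity (v (u - ε * X ω)) y ∂P)
        - gaussDensity (v u) y *
          (1 + ε ^ 2 * (∫ ω, (X ω) ^ 2 ∂P) / 2 *
            ((v' u) ^ 2 * (y ^ 4 - 6 * v u * y ^ 2 + 3 * (v u) ^ 2) / (4 * (v u) ^ 4)
              + v'' * (y ^ 2 - v u) / (2 * (v u) ^ 2)))|
      ≤ (L : ℝ) / 6 * ε ^ 3 * (∫ ω, |X ω| ^ 3 ∂P) := by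
  have hw : ∀ᶠ z in 𝓝 0, HasDerivAt (fun s => v (u - s)) (-v' (u - z)) z := by
    have : Tendsto (fun z : ℝ => u - z) (𝓝 0) (𝓝 u) := by
      simpa using (continuous_sub_left u).tendsto 0
    filter_upwards [this.eventually hv'] with z hz using hz.comp_const_sub u z
  have hw₁ : HasDerivAt (fun s => -v' (u - s)) v'' 0 :=
    (HasDerivAt.comp_const_sub u 0 (by simpa using hv'')).fun_neg.congr_deriv (neg_neg _)
  have hF : ∀ᶠ z in 𝓝 (v (u - 0)), HasDerivAt (gaussDensity · y)
      (gaussDensity z y * ((y ^ 2 - z) / (2 * z ^ 2))) z :=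
    eventually_of_mem (Ioi_mem_nhds (hv_pos _)) fun z hz => hasDerivAt_gaussDensity y hz
  have hψ''0 := (hψ'' 0).unique <| hasDerivAt_second_deriv_comp (w := fun s => v (u - s)) hF
    (hasDerivAt_gaussDensity_deriv y (hv_pos _)) hw hw₁ (Eventually.of_forall hψ')
  have htaylor := abs_integral_sub_taylor_two_le (P := P) (X := fun ω => ε * X ω)
    (hX_meas.const_mul ε).aemeasurable (by simp [integral_const_mul, hX_mean])
    (by simpa [abs_mul, mul_pow] using hX3.const_mul (|ε| ^ 3)) hψ' hψ'' hψ''_lip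
  simp only [mul_pow, abs_mul, abs_of_pos hε, integral_const_mul, hψ''0, sub_zero] at htaylor
  convert htaylor using 1
  · congr 1
    field_simp
  · ring
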